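/- In the setting of iterated silting reduction, the truncation functors satisfy: σ^{>0}_{σ_P^{-1}(Q)} is naturally isomorphic to the composite σ^{>0}_Q ∘ σ^{>0}_P. Consequently the composition rule (Q, P) ↦ σ_P^{-1}(Q) in the τ-cluster morphism category C_{D,S} is associative: R ∘ (Q ∘ P) = (R ∘ Q) ∘ P for composable morphisms P, Q, R. -/

import Mathlib

open CategoryTheory Limits Pretriangulated ZeroObject

universe v u

namespace Paper

variable {C : Type u} [Category.{v} C] [Preadditive C] [HasZeroObject C]
  [HasShift C ℤ] [∀ n : ℤ, (CategoryTheory.shiftFunctor C n).Additive] [Pretriangulated C]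
  [HasBinaryBiproducts C]

/-- A class of objects closed under isomorphism. -/
def ClosedIso (P : C → Prop) : Prop := ∀ ⦃X Y : C⦄, (X ≅ Y) → P X → P Y

/-- A class of objects closed under extensions. -/
def ExtClosed (P : C → Prop) : Prop :=
  ∀ T : Triangle C, T ∈ (distTriang C) → P T.obj₁ → P T.obj₃ → P T.obj₂

/-- A suspended subcategory: additive (iso-closed, contains 0, closed under finite sums via
extensions), closed under the suspension `Σ = ⟦1⟧` and under extensions. -/
structure Suspended (P : C → Prop) : Prop where
  iso : ClosedIso P
  zero : P 0
  shift : ∀ ⦃X : C⦄, P X → P (X⟦(1:ℤ)⟧)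
  ext : ExtClosed P

/-- A t-structure `(L, G) = (D^{≤0}, D^{>0})`: Hom-orthogonality, every object is an extension,
`L` is suspended; both classes are closed under isomorphism. -/
structure IsTStr (L G : C → Prop) : Prop where
  isoL : ClosedIso L
  isoG : ClosedIso G
  zeroL : L 0
  homZero : ∀ ⦃X Y : C⦄, L X → G Y → ∀ f : X ⟶ Y, f = 0
  trunc : ∀ X : C, ∃ (A B : C) (f : A ⟶ X) (g : X ⟶ B) (h : B ⟶ A⟦(1:ℤ)⟧),
    Triangle.mk f g h ∈ (distTriang C) ∧ L A ∧ G B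
  shiftL : ∀ ⦃X : C⦄, L X → L (X⟦(1:ℤ)⟧)
  extL : ExtClosed L

/-- The right orthogonal `U^{⊥₀}` of a class of objects. -/
def rightOrth (U : C → Prop) (Y : C) : Prop := ∀ X : C, U X → ∀ f : X ⟶ Y, f = 0

/-- `Y ∈ P^{⊥_{≤ m}}`: `Hom(P, Σ^i Y) = 0` for all `i ≤ m`. -/
def perpLe (P : C) (m : ℤ) (Y : C) : Prop := ∀ i : ℤ, i ≤ m → ∀ f : P ⟶ Y⟦i⟧, f = 0

/-- `Y ∈ P^{⊥_{> m}}`: `Hom(P, Σ^i Y) = 0` for all `i > m`. -/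
def perpGt (P : C) (m : ℤ) (Y : C) : Prop := ∀ i : ℤ, m < i → ∀ f : P ⟶ Y⟦i⟧, f = 0

/-- `Y ∈ P^{⊥_ℤ}`: `Hom(P, Σ^i Y) = 0` for all integers `i`. -/
def perpZ (P : C) (Y : C) : Prop := ∀ i : ℤ, ∀ f : P ⟶ Y⟦i⟧, f = 0

/-- `X ∈ ^{⊥_{>0}}P`: `Hom(X, Σ^i P) = 0` for all `i > 0`. -/
def leftPerpGt0 (P : C) (X : C) : Prop := ∀ i : ℤ, 0 < i → ∀ f : X ⟶ P⟦i⟧, f = 0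

/-- `susp(P)`, the smallest suspended subcategory containing `P`. -/
def suspObj (P : C) (X : C) : Prop := ∀ U : C → Prop, Suspended U → U P → U X

/-- An additive subcategory closed under direct summands. -/
structure AddSub (U : C → Prop) : Prop where
  iso : ClosedIso U
  zero : U 0
  biprod : ∀ X Y : C, U X → U Y → U (X ⊞ Y)
  summand : ∀ X Y : C, U (X ⊞ Y) → U X

/-- `add(P)`: the additive closure of `P` (finite direct sums of direct summands). -/
def addObj (P : C) (X : C) : Prop := ∀ U : C → Prop, AddSub U → U P → U X

/-- A thick triangulated subcategory. -/
structure ThickSub (U : C → Prop) : Prop where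
  iso : ClosedIso U
  zero : U 0
  shift : ∀ ⦃X : C⦄, U X → ∀ n : ℤ, U (X⟦n⟧)
  ext : ExtClosed U
  summand : ∀ X Y : C, U (X ⊞ Y) → U X

/-- `thick(P)`: the smallest thick subcategory containing `P`. -/
def thickObj (P : C) (X : C) : Prop := ∀ U : C → Prop, ThickSub U → U P → U X

/-- A triangulated subcategory (iso-closed, shift-closed both ways, extension-closed). -/
structure TriangSub (U : C → Prop) : Prop where
  iso : ClosedIso U
  zero : U 0
  shift : ∀ ⦃X : C⦄, U X → ∀ n : ℤ, U (X⟦n⟧)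
  ext : ExtClosed U

/-- `P` is presilting: `Hom(P, Σ^n P) = 0` for all `n > 0`. -/
def Presilting (P : C) : Prop := ∀ n : ℤ, 0 < n → ∀ f : P ⟶ P⟦n⟧, f = 0

/-- `P` is partial silting: `(susp(P), P^{⊥_{≤0}})` is a t-structure and
`susp(P) ⊆ P^{⊥_{>0}}`. -/
def PartialSilting (P : C) : Prop :=
  IsTStr (suspObj P) (perpLe P 0) ∧ ∀ X : C, suspObj P X → perpGt P 0 X

/-- `S` is silting: partial silting with `susp(S) = S^{⊥_{>0}}`. -/
def Silting (S : C) : Prop :=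
  PartialSilting S ∧ ∀ X : C, suspObj S X ↔ perpGt S 0 X

/-- `X ∈ D^{≤ n}` for the t-structure with aisle `L`. -/
def DLe (L : C → Prop) (n : ℤ) (X : C) : Prop := L (X⟦n⟧)

/-- `X ∈ D^{> m}` for the t-structure with co-aisle `G`. -/
def DGt (G : C → Prop) (m : ℤ) (X : C) : Prop := G (X⟦m⟧)

/-- The t-structure `(L, G)` is bounded. -/
def BoundedTStr (L G : C → Prop) : Prop :=
  ∀ X : C, (∃ n : ℤ, DLe L n X) ∧ (∃ m : ℤ, DGt G m X)

/-- `H` is (a choice of) the `i`-th cohomology `H^i(X) = σ^{≤ i} σ^{> i-1} X` of `X` with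
respect to the t-structure `(L, G)`, expressed by the two truncation triangles. -/
def IsCohomAt (L G : C → Prop) (i : ℤ) (X H : C) : Prop :=
  ∃ (A B B' : C) (f : A ⟶ X) (g : X ⟶ B) (h : B ⟶ A⟦(1:ℤ)⟧)
    (f' : H ⟶ B) (g' : B ⟶ B') (h' : B' ⟶ H⟦(1:ℤ)⟧),
    Triangle.mk f g h ∈ (distTriang C) ∧ DLe L (i-1) A ∧ DGt G (i-1) B ∧
    Triangle.mk f' g' h' ∈ (distTriang C) ∧ DLe L i H ∧ DGt G i B'

/-- The heart `D^0 = D^{≤0} ∩ D^{>-1}` of the t-structure `(L, G)`. -/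
def Heart (L G : C → Prop) (X : C) : Prop := L X ∧ DGt G (-1) X

/-- A t-exact subcategory: a triangulated subcategory closed under the truncation `σ^{≤0}`
of the t-structure `(L, G)`. -/
def TExactSub (L G : C → Prop) (S : C → Prop) : Prop :=
  TriangSub S ∧
    ∀ (X A B : C) (f : A ⟶ X) (g : X ⟶ B) (h : B ⟶ A⟦(1:ℤ)⟧),
      S X → Triangle.mk f g h ∈ (distTriang C) → L A → G B → S A


/-- The class of objects `U` admits coreflections: every object has a couniversal morphism
from `U`, i.e. the inclusion of `U` admits a right adjoint. -/
def HasCoreflections (U : C → Prop) : Prop :=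
  ∀ X : C, ∃ (A : C) (ε : A ⟶ X), U A ∧
    ∀ A' : C, U A' → ∀ g : A' ⟶ X, ∃! g' : A' ⟶ A, g' ≫ ε = g

/-- `X` is a `2_S`-term object: `X ∈ add(S) * Σ add(S)`. -/
def TwoTerm (S X : C) : Prop :=
  ∃ (S₁ S₀ : C) (f : S₁ ⟶ S₀) (g : S₀ ⟶ X) (h : X ⟶ S₁⟦(1:ℤ)⟧),
    Triangle.mk f g h ∈ (distTriang C) ∧ addObj S S₁ ∧ addObj S S₀

/-- `X` is indecomposable. -/
def Indec (X : C) : Prop :=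
  ¬ IsZero X ∧ ∀ Y Z : C, (X ≅ Y ⊞ Z) → IsZero Y ∨ IsZero Z

/-- `add(A)` is contravariantly finite: every object admits a right `add(A)`-approximation. -/
def ContravFinAdd (A : C) : Prop :=
  ∀ X : C, ∃ (Q : C) (q : Q ⟶ X), addObj A Q ∧
    ∀ Q' : C, addObj A Q' → ∀ g : Q' ⟶ X, ∃ g' : Q' ⟶ Q, g' ≫ q = g

/-- `S` is a bounded silting object. -/
def BoundedSilting (S : C) : Prop :=
  Silting S ∧ BoundedTStr (suspObj S) (perpLe S 0)

/-- Hom-finiteness of `C` over a field `k`. -/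
def HomFinite (k : Type w) [Field k] [Linear k C] : Prop :=
  ∀ X Y : C, FiniteDimensional k (X ⟶ Y)

/-- The Krull–Schmidt property: every object is a finite direct sum of objects with local
endomorphism rings. -/
def KrullSchmidt : Prop :=
  ∀ X : C, ∃ l : List C, (∀ Y ∈ l, IsLocalRing (End Y)) ∧
    Nonempty (X ≅ l.foldr (· ⊞ ·) 0)

/-- A wide subcategory of the heart of the t-structure `(L, G)`: closed under isomorphisms,
extensions, kernels and cokernels (the latter two expressed via cones and cohomology). -/
structure HeartWide (L G W : C → Prop) : Prop where
  sub : ∀ ⦃X : C⦄, W X → Heart L G X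
  iso : ClosedIso W
  ext : ∀ (X Y Z : C) (f : X ⟶ Y) (g : Y ⟶ Z) (h : Z ⟶ X⟦(1:ℤ)⟧),
    W X → W Z → Heart L G Y → Triangle.mk f g h ∈ (distTriang C) → W Y
  kerCoker : ∀ (X Y Z : C) (f : X ⟶ Y) (g : Y ⟶ Z) (h : Z ⟶ X⟦(1:ℤ)⟧),
    W X → W Y → Triangle.mk f g h ∈ (distTriang C) →
    (∀ K : C, IsCohomAt L G (-1) Z K → W K) ∧ (∀ Q : C, IsCohomAt L G 0 Z Q → W Q)

/-- The subgroup of relations defining `K₀` of the thick subcategory `S`. -/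
def K0Rel (S : C → Prop) : AddSubgroup (FreeAbelianGroup C) :=
  AddSubgroup.closure
    {x | (∃ X : C, ¬ S X ∧ x = FreeAbelianGroup.of X) ∨
      ∃ T : Triangle C, T ∈ (distTriang C) ∧ S T.obj₁ ∧ S T.obj₂ ∧ S T.obj₃ ∧
        x = FreeAbelianGroup.of T.obj₂ - FreeAbelianGroup.of T.obj₁
          - FreeAbelianGroup.of T.obj₃}

/-- The Grothendieck group of the (thick) subcategory `S`. -/
abbrev K0 (S : C → Prop) := FreeAbelianGroup C ⧸ K0Rel S

/-- The class `[X]` in the Grothendieck group. -/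
def K0cls (S : C → Prop) (X : C) : K0 S :=
  QuotientAddGroup.mk (FreeAbelianGroup.of X)

/-- A `2_S`-term presilting sequence `(X₁, …, X_t)` in the ambient subcategory `Amb` with respect
to the silting object `S`, defined recursively: the last term `X` is an indecomposable `2_S`-term
presilting object, and the truncated sequence is a `2_{σ^{>0}_X T}`-term presilting sequence in
`Amb ∩ X^{⊥_ℤ}`, where `T = X ⊕ Q` is the Bongartz completion of `X`. -/
inductive PresiltSeq : (C → Prop) → C → List C → Prop
  | nil (Amb : C → Prop) (S : C) : PresiltSeq Amb S []
  | cons (Amb : C → Prop) (S X : C) (l : List C)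
      (hX : Amb X) (h2 : TwoTerm S X) (hpre : Presilting X) (hind : Indec X)
      -- Bongartz completion `T = X ⊞ Q`, via an approximation triangle `S → Q → X₀ → ΣS`
      (Q X₀ : C) (i : S ⟶ Q) (p : Q ⟶ X₀) (β : X₀ ⟶ S⟦(1:ℤ)⟧)
      (hB : Triangle.mk i p β ∈ (distTriang C)) (hX₀ : addObj X X₀)
      (happrox : ∀ X' : C, addObj X X' → ∀ g : X' ⟶ S⟦(1:ℤ)⟧, ∃ g', g' ≫ β = g)
      -- the truncation `T' = σ^{>0}_X (X ⊞ Q)`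
      (T' A : C) (f : A ⟶ X ⊞ Q) (g : X ⊞ Q ⟶ T') (h : T' ⟶ A⟦(1:ℤ)⟧)
      (hTr : Triangle.mk f g h ∈ (distTriang C)) (hA : suspObj X A) (hT' : perpLe X 0 T')
      (hrest : PresiltSeq (fun Y => Amb Y ∧ perpZ X Y) T' l) :
      PresiltSeq Amb S (l ++ [X])

/-!
For (1): the truncations `X ⟶ σ^{>0}_P X ⟶ σ^{>0}_Q σ^{>0}_P X` have cocones in
`susp P` and `susp Q`, both contained in `susp (P ⊞ Q')`, and the end result lies in
`P^{⊥≤0} ∩ Q^{⊥≤0} ⊆ (P ⊞ Q')^{⊥≤0}`. So the composite, like `σ^{>0}_{P ⊞ Q'}`, is a reflection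
into `(P ⊞ Q')^{⊥≤0}`, and reflections are unique; no octahedral axiom is needed.

For (2): a lift `Y` of `Z` along `M` (a triangle `M₀ ⟶ Y ⟶ Z ⟶ M₀⟦1⟧` with `M₀ ∈ susp M`,
`Y ∈ ⊥(>0) M`) is unique up to `add M`. Maps between the bases of two lifts lift to maps between
the lifts, and the defect factors through `M₀`; so by Krull–Schmidt every indecomposable summand of
`Y` is a summand of the other lift or lies in `susp M ∩ ⊥(>0) M`, which is `add M` by an
`add M`-approximation argument. By (1), `σ^{>0}_P R₁` is a lift of `R` along `Q`, like `R₂`;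
hence `Q' ⊞ R₁` and `W` are lifts along `P` of objects with the same additive closure.
-/

set_option linter.unusedSectionVars false

def NoHom (X Y : C) : Prop := ∀ f : X ⟶ Y, f = 0

section NoHom

lemma NoHom.of_iso_src {X X' Y : C} (e : X ≅ X') (h : NoHom X Y) : NoHom X' Y := fun f => by
  simpa using e.inv ≫= h (e.hom ≫ f)

lemma NoHom.of_iso_tgt {X Y Y' : C} (e : Y ≅ Y') (h : NoHom X Y) : NoHom X Y' := fun f => by
  simpa using h (f ≫ e.inv) =≫ e.hom

lemma NoHom.shift {X Y : C} (h : NoHom X Y) (n : ℤ) : NoHom (X⟦n⟧) (Y⟦n⟧) := fun f => by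
  obtain ⟨g, rfl⟩ := (shiftFunctor C n).map_surjective f
  rw [h g, Functor.map_zero]

lemma noHom_biprod_src {A B Z : C} (hA : NoHom A Z) (hB : NoHom B Z) : NoHom (A ⊞ B) Z :=
  fun f => biprod.hom_ext' _ _ (by simpa using hA _) (by simpa using hB _)

lemma noHom_obj₂_src {T : Triangle C} (hT : T ∈ distTriang C) {Z : C}
    (h₁ : NoHom T.obj₁ Z) (h₃ : NoHom T.obj₃ Z) : NoHom T.obj₂ Z := fun f => by
  obtain ⟨g, rfl⟩ := Triangle.yoneda_exact₂ T hT f (h₁ _)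
  rw [h₃ g, comp_zero]

lemma noHom_obj₂_tgt {T : Triangle C} (hT : T ∈ distTriang C) {W : C}
    (h₁ : NoHom W T.obj₁) (h₃ : NoHom W T.obj₃) : NoHom W T.obj₂ := fun f => by
  obtain ⟨g, rfl⟩ := Triangle.coyoneda_exact₂ T hT f (h₃ _)
  rw [h₁ g, zero_comp]

lemma extClosed_noHom_shift_src (Z : C) (I : ℤ → Prop) :
    ExtClosed (fun X => ∀ n, I n → NoHom X (Z⟦n⟧)) :=
  fun _ hT h₁ h₃ n hn => noHom_obj₂_src hT (h₁ n hn) (h₃ n hn)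

lemma extClosed_noHom_shift_tgt (W : C) (I : ℤ → Prop) :
    ExtClosed (fun Y => ∀ n, I n → NoHom W (Y⟦n⟧)) :=
  fun T hT h₁ h₃ n hn =>
    noHom_obj₂_tgt (Triangle.shift_distinguished T hT n) (h₁ n hn) (h₃ n hn)

lemma suspended_noHom_shift_src (Z : C) {I : ℤ → Prop} (hI : ∀ n, I n → I (n - 1)) :
    Suspended (fun X => ∀ n, I n → NoHom X (Z⟦n⟧)) where
  iso _ _ e h n hn := (h n hn).of_iso_src e
  zero _ _ f := (isZero_zero C).eq_of_src f 0
  shift X h n hn := ((h (n - 1) (hI n hn)).shift 1).of_iso_tgt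
    ((shiftFunctorAdd' C (n - 1) 1 n (by omega)).app Z).symm
  ext := extClosed_noHom_shift_src Z I

lemma suspended_noHom_shift_tgt (W : C) {I : ℤ → Prop} (hI : ∀ n, I n → I (1 + n)) :
    Suspended (fun Y => ∀ n, I n → NoHom W (Y⟦n⟧)) where
  iso _ _ e h n hn := (h n hn).of_iso_tgt ((shiftFunctor C n).mapIso e)
  zero n _ f := ((shiftFunctor C n).map_isZero (isZero_zero C)).eq_of_tgt f 0
  shift Y h n hn := (h (1 + n) (hI n hn)).of_iso_tgt ((shiftFunctorAdd C 1 n).app Y)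
  ext := extClosed_noHom_shift_tgt W I

end NoHom

section Suspended

lemma suspObj_self (M : C) : suspObj M M := fun _ _ h => h

lemma suspended_suspObj (M : C) : Suspended (suspObj M) where
  iso _ _ e h U hU hM := hU.iso e (h U hU hM)
  zero _ hU _ := hU.zero
  shift _ h U hU hM := hU.shift (h U hU hM)
  ext T hT h₁ h₃ U hU hM := hU.ext T hT (h₁ U hU hM) (h₃ U hU hM)

lemma suspObj.trans {M N X : C} (hN : suspObj M N) (hX : suspObj N X) : suspObj M X :=
  fun U hU hM => hX U hU (hN U hU hM)

lemma suspObj.shift {M X : C} (hX : suspObj M X) : suspObj M (X⟦(1:ℤ)⟧) :=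
  (suspended_suspObj M).shift hX

lemma suspObj.biprod {M A B : C} (hA : suspObj M A) (hB : suspObj M B) : suspObj M (A ⊞ B) :=
  (suspended_suspObj M).ext _ (binaryBiproductTriangle_distinguished A B) hA hB

lemma suspObj.perpZ_left {M X Z : C} (hX : suspObj M X) (h : perpZ M Z) : perpZ X Z :=
  fun n => hX _ (suspended_noHom_shift_src Z (I := fun _ => True) fun _ _ => trivial)
    (fun n _ => h n) n trivial

lemma suspObj.perpLe_left {M X Z : C} (hX : suspObj M X) (h : perpLe M 0 Z) : perpLe X 0 Z :=
  hX _ (suspended_noHom_shift_src Z fun _ _ => by omega) h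

lemma suspObj.perpZ_right {M W Y : C} (hY : suspObj M Y) (h : perpZ W M) : perpZ W Y :=
  fun n => hY _ (suspended_noHom_shift_tgt W (I := fun _ => True) fun _ _ => trivial)
    (fun n _ => h n) n trivial

lemma suspObj.leftPerpGt0 {M X Y : C} (hY : suspObj M Y) (h : leftPerpGt0 M X) :
    leftPerpGt0 Y X :=
  hY _ (suspended_noHom_shift_tgt X fun _ _ => by omega) h

end Suspended

section TStructure

variable {L G : C → Prop}

lemma IsTStr.aisle_of_retract (ht : IsTStr L G) {X W : C} (hW : L W) (r : Retract X W) : L X := by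
  obtain ⟨A, B, f, g, h, hT, hA, hB⟩ := ht.trunc X
  have hg : g = 0 := by simpa using r.i ≫= ht.homZero hW hB (r.r ≫ g)
  obtain ⟨ψ, hψ⟩ := Triangle.yoneda_exact₃ _ hT (𝟙 B) (by
    change g ≫ 𝟙 B = 0
    rw [hg, zero_comp])
  have hB₀ : IsZero B := by
    rw [IsZero.iff_id_eq_zero, hψ, ht.homZero (ht.shiftL hA) hB ψ]
    exact comp_zero
  have : IsIso f := (Triangle.isZero₃_iff_isIso₁ _ hT).1 hB₀
  exact ht.isoL (asIso f) hA

lemma IsTStr.isLocal_of_distTriang (ht : IsTStr L G) {T : Triangle C} (hT : T ∈ distTriang C)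
    (hA : L T.obj₁) : ObjectProperty.isLocal G T.mor₂ := fun Z hZ => by
  refine ⟨fun φ₁ φ₂ hφ => ?_, fun φ => ?_⟩
  · rw [← sub_eq_zero]
    obtain ⟨ψ, hψ⟩ := Triangle.yoneda_exact₃ T hT (φ₁ - φ₂)
      (by simpa [Preadditive.comp_sub, sub_eq_zero] using hφ)
    rw [hψ, ht.homZero (ht.shiftL hA) hZ ψ, comp_zero]
  · obtain ⟨ψ, hψ⟩ := Triangle.yoneda_exact₂ T hT φ (ht.homZero hA hZ _)
    exact ⟨ψ, hψ.symm⟩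

end TStructure

lemma _root_.CategoryTheory.ObjectProperty.isLocal.nonempty_iso {G : ObjectProperty C}
    {X B B' : C} {g : X ⟶ B} {g' : X ⟶ B'} (hg : G.isLocal g) (hg' : G.isLocal g') (hB : G B)
    (hB' : G B') :
    Nonempty (B ≅ B') := by
  obtain ⟨φ, hφ⟩ := (hg B' hB').2 g'
  have hφ' : G.isLocal (g ≫ φ) := by simpa [← hφ] using hg'
  have := (G.isLocal_iff_isIso φ hB hB').1 (G.isLocal.of_precomp g φ hg hφ')
  exact ⟨asIso φ⟩

section AdditiveClosure

lemma addObj_self (T : C) : addObj T T := fun _ _ h => h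

lemma addSub_addObj (T : C) : AddSub (addObj T) where
  iso _ _ e h U hU hT := hU.iso e (h U hU hT)
  zero _ hU _ := hU.zero
  biprod X Y hX hY U hU hT := hU.biprod X Y (hX U hU hT) (hY U hU hT)
  summand X Y h U hU hT := hU.summand X Y (h U hU hT)

lemma addObj_trans {T E X : C} (hE : addObj T E) (hX : addObj E X) : addObj T X :=
  fun U hU hT => hX U hU (hE U hU hT)

lemma addObj_biprod_left (A B : C) : addObj (A ⊞ B) A := fun _ hU h => hU.summand _ _ h

lemma addObj_biprod_right (A B : C) : addObj (A ⊞ B) B := fun _ hU h =>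
  hU.summand _ _ (hU.iso (biprod.braiding A B) h)

lemma addObj_congr_left {T T' : C} (e : T ≅ T') (X : C) : addObj T X ↔ addObj T' X :=
  ⟨addObj_trans ((addSub_addObj T').iso e.symm (addObj_self T')),
    addObj_trans ((addSub_addObj T).iso e (addObj_self T))⟩

lemma addObj_biprod_iff_of_mutual {P V W : C} (hW : addObj (P ⊞ V) W) (hV : addObj (P ⊞ W) V)
    (X : C) : addObj (P ⊞ V) X ↔ addObj (P ⊞ W) X :=
  ⟨addObj_trans ((addSub_addObj _).biprod _ _ (addObj_biprod_left P W) hV),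
    addObj_trans ((addSub_addObj _).biprod _ _ (addObj_biprod_left P V) hW)⟩

lemma IsTStr.suspObj_of_addObj {M X : C} {G : C → Prop} (ht : IsTStr (suspObj M) G)
    (hX : addObj M X) : suspObj M X :=
  hX _ ⟨ht.isoL, ht.zeroL, fun _ _ hA hB => hA.biprod hB,
    fun _ _ h => ht.aisle_of_retract h ⟨biprod.inl, biprod.fst, by simp⟩⟩ (suspObj_self M)

end AdditiveClosure

section KrullSchmidt

/-- `f` factors through some `Tⁿ`; for `f = 𝟙 X` this says that `X` is a retract of `Tⁿ`. -/
def SumFactorsThrough (T : C) {X Y : C} (f : X ⟶ Y) : Prop :=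
  ∃ (n : ℕ) (u : Fin n → (X ⟶ T)) (v : Fin n → (T ⟶ Y)), ∑ i, u i ≫ v i = f

lemma SumFactorsThrough.comp_comp {T X' X Y Y' : C} {f : X ⟶ Y} (hf : SumFactorsThrough T f)
    (g : X' ⟶ X) (h : Y ⟶ Y') : SumFactorsThrough T (g ≫ f ≫ h) := by
  obtain ⟨n, u, v, rfl⟩ := hf
  exact ⟨n, fun i => g ≫ u i, fun i => v i ≫ h, by
    simp [Preadditive.comp_sum, Preadditive.sum_comp]⟩

lemma SumFactorsThrough.add {T X Y : C} {f g : X ⟶ Y} (hf : SumFactorsThrough T f)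
    (hg : SumFactorsThrough T g) : SumFactorsThrough T (f + g) := by
  obtain ⟨n, u, v, rfl⟩ := hf
  obtain ⟨m, u', v', rfl⟩ := hg
  exact ⟨n + m, Fin.append u u', Fin.append v v', by simp [Fin.sum_univ_add]⟩

lemma sumFactorsThrough_id_of_addObj {T X : C} (hX : addObj T X) : SumFactorsThrough T (𝟙 X) :=
  hX (fun X => SumFactorsThrough T (𝟙 X))
    { iso := fun _ _ e h => by simpa using h.comp_comp e.inv e.hom
      zero := ⟨0, Fin.elim0, Fin.elim0, (isZero_zero C).eq_of_src _ _⟩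
      biprod := fun A B hA hB => by
        simpa using (hA.comp_comp biprod.fst biprod.inl).add (hB.comp_comp biprod.snd biprod.inr)
      summand := fun A B h => by simpa using h.comp_comp biprod.inl biprod.fst }
    ⟨1, fun _ => 𝟙 T, fun _ => 𝟙 T, by simp⟩

lemma nonempty_retract_of_isUnit {X T : C} (s : X ⟶ T) (p : T ⟶ X)
    (h : IsUnit (End.of (s ≫ p))) : Nonempty (Retract X T) := by
  have : IsIso (s ≫ p) := (isUnit_iff_isIso _).1 h
  exact ⟨⟨s, p ≫ inv (s ≫ p), by rw [← Category.assoc, IsIso.hom_inv_id]⟩⟩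

lemma SumFactorsThrough.nonempty_retract {T X : C} [IsLocalRing (End X)] {f : X ⟶ X}
    (hf : SumFactorsThrough T f) (hu : IsUnit (End.of f)) : Nonempty (Retract X T) := by
  obtain ⟨n, u, v, rfl⟩ := hf
  obtain ⟨i, -, hi⟩ := IsLocalRing.exists_of_isUnit_sum (s := Finset.univ)
    (f := fun i => End.of (u i ≫ v i)) hu
  exact nonempty_retract_of_isUnit _ _ hi

lemma _root_.CategoryTheory.Retract.of_biprod {X A B : C} [IsLocalRing (End X)]
    (r : Retract X (A ⊞ B)) : Nonempty (Retract X A) ∨ Nonempty (Retract X B) := by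
  have hu : IsUnit (End.of ((r.i ≫ biprod.fst) ≫ biprod.inl ≫ r.r) +
      End.of ((r.i ≫ biprod.snd) ≫ biprod.inr ≫ r.r)) := by
    convert isUnit_one (M := End X)
    have : r.i ≫ (biprod.fst ≫ biprod.inl + biprod.snd ≫ biprod.inr) ≫ r.r = 𝟙 X := by
      simp
    rw [Preadditive.add_comp, Preadditive.comp_add] at this
    simp only [Category.assoc] at this ⊢
    exact this
  exact (IsLocalRing.isUnit_or_isUnit_of_isUnit_add hu).imp
    (nonempty_retract_of_isUnit _ _) (nonempty_retract_of_isUnit _ _)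

lemma _root_.CategoryTheory.Retract.nonempty_iso {X Y : C} [IsLocalRing (End X)]
    [IsLocalRing (End Y)] (r : Retract X Y) : Nonempty (X ≅ Y) := by
  have he : IsIdempotentElem (End.of (r.r ≫ r.i)) := by
    change (r.r ≫ r.i) ≫ r.r ≫ r.i = r.r ≫ r.i
    simp
  have hu : IsUnit (End.of (r.r ≫ r.i) + (1 - End.of (r.r ≫ r.i))) := by
    rw [add_sub_cancel]
    exact isUnit_one
  rcases IsLocalRing.isUnit_or_isUnit_of_isUnit_add hu with h | h
  · exact ⟨⟨r.i, r.r, r.retract, (IsIdempotentElem.iff_eq_one_of_isUnit h).1 he⟩⟩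
  · have h0 : r.r ≫ r.i = 0 :=
      sub_eq_self.1 ((IsIdempotentElem.iff_eq_one_of_isUnit h).1 he.one_sub)
    have : (1 : End X) = 0 := by
      calc 𝟙 X = (r.i ≫ r.r) ≫ r.i ≫ r.r := by simp
        _ = r.i ≫ (r.r ≫ r.i) ≫ r.r := by simp only [Category.assoc]
        _ = 0 := by rw [h0, zero_comp, comp_zero]
    exact (one_ne_zero this).elim

lemma retract_foldr_of_mem {m : C} : ∀ {l : List C}, m ∈ l →
    Nonempty (Retract m (l.foldr (· ⊞ ·) 0))
  | a :: t, h => by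
    rcases List.mem_cons.1 h with rfl | h
    · exact ⟨⟨biprod.inl, biprod.fst, by simp⟩⟩
    · exact ⟨(retract_foldr_of_mem h).some.trans ⟨biprod.inr, biprod.snd, by simp⟩⟩

lemma addObj_foldr_of_mem {m : C} : ∀ {l : List C}, m ∈ l → addObj (l.foldr (· ⊞ ·) 0) m
  | a :: t, h => by
    rcases List.mem_cons.1 h with rfl | h
    · exact addObj_biprod_left _ _
    · exact addObj_trans (addObj_biprod_right a _) (addObj_foldr_of_mem h)

lemma addObj_foldr {T : C} : ∀ {l : List C}, (∀ m ∈ l, addObj T m) →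
    addObj T (l.foldr (· ⊞ ·) 0)
  | [], _ => (addSub_addObj T).zero
  | a :: t, h => (addSub_addObj T).biprod _ _ (h a (by simp))
      (addObj_foldr fun m hm => h m (by simp [hm]))

lemma exists_mem_retract_foldr {X : C} [IsLocalRing (End X)] : ∀ {l : List C},
    Retract X (l.foldr (· ⊞ ·) 0) → ∃ m ∈ l, Nonempty (Retract X m)
  | [], r => by
    have : (1 : End X) = 0 := by
      change 𝟙 X = 0
      rw [← r.retract, (isZero_zero C).eq_of_tgt r.i 0]
      exact zero_comp
    exact (one_ne_zero this).elim
  | a :: t, r => by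
    rcases r.of_biprod with h | h
    · exact ⟨a, by simp, h⟩
    · obtain ⟨m, hm, hr⟩ := exists_mem_retract_foldr h.some
      exact ⟨m, by simp [hm], hr⟩

lemma addObj_of_retract_of_isLocalRing (hKS : KrullSchmidt (C := C)) {X T : C}
    [IsLocalRing (End X)] (r : Retract X T) : addObj T X := by
  obtain ⟨l, hl, ⟨e⟩⟩ := hKS T
  obtain ⟨m, hm, ⟨r'⟩⟩ := exists_mem_retract_foldr (r.trans (Retract.ofIso e))
  have := hl m hm
  obtain ⟨e'⟩ := r'.nonempty_iso
  exact (addSub_addObj T).iso e'.symm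
    (addObj_trans ((addSub_addObj T).iso e (addObj_self T)) (addObj_foldr_of_mem hm))

lemma addObj_of_forall_isLocalRing_retract (hKS : KrullSchmidt (C := C)) {T Y : C}
    (h : ∀ X, IsLocalRing (End X) → Retract X Y → addObj T X) : addObj T Y := by
  obtain ⟨l, hl, ⟨e⟩⟩ := hKS Y
  exact (addSub_addObj T).iso e.symm (addObj_foldr fun m hm =>
    h m (hl m hm) ((retract_foldr_of_mem hm).some.trans (Retract.ofIso e.symm)))

lemma addObj_of_retract (hKS : KrullSchmidt (C := C)) {T E X : C} (r : Retract X E)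
    (hE : addObj T E) : addObj T X :=
  addObj_of_forall_isLocalRing_retract hKS fun X' _ r' =>
    have hX' : SumFactorsThrough T (𝟙 X') := by
      simpa using (sumFactorsThrough_id_of_addObj hE).comp_comp (r'.i ≫ r.i) (r.r ≫ r'.r)
    addObj_of_retract_of_isLocalRing hKS (hX'.nonempty_retract isUnit_one).some

end KrullSchmidt

section Approximation

variable {k : Type*} [Semiring k] [Linear k C]

lemma exists_approx_of_finset (M X : C) (s : Finset (M ⟶ X)) :
    ∃ E, addObj M E ∧ ∃ q : E ⟶ X,
      ∀ φ ∈ Submodule.span k (s : Set (M ⟶ X)), ∃ χ : M ⟶ E, χ ≫ q = φ := by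
  classical
  induction s using Finset.induction_on with
  | empty => exact ⟨0, (addSub_addObj M).zero, 0, fun φ hφ => ⟨0, by simp_all⟩⟩
  | insert g s _ ih =>
    obtain ⟨E, hE, q, hq⟩ := ih
    refine ⟨M ⊞ E, (addSub_addObj M).biprod _ _ (addObj_self M) hE, biprod.desc g q,
      fun φ hφ => ?_⟩
    rw [Finset.coe_insert, Submodule.mem_span_insert] at hφ
    obtain ⟨c, z, hz, rfl⟩ := hφ
    obtain ⟨χ, rfl⟩ := hq z hz
    exact ⟨biprod.lift (c • 𝟙 M) χ, by simp⟩

end Approximation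

lemma exists_rightApprox {k : Type*} [Field k] [Linear k C] (hfin : HomFinite (C := C) k)
    (M X : C) : ∃ E, addObj M E ∧ ∃ q : E ⟶ X, ∀ φ : M ⟶ X, ∃ χ, χ ≫ q = φ := by
  obtain ⟨s, hs⟩ := (hfin M X).fg_top
  obtain ⟨E, hE, q, hq⟩ := exists_approx_of_finset (k := k) M X s
  exact ⟨E, hE, q, fun φ => hq φ (hs ▸ Submodule.mem_top)⟩

section Coheart

lemma PartialSilting.noHom_of_forall_nonneg {M X Y : C} (hM : PartialSilting M)
    (hX : suspObj M X) (hXM : leftPerpGt0 M X) (hY : ∀ i : ℤ, 0 ≤ i → NoHom M (Y⟦i⟧)) :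
    NoHom X Y := by
  obtain ⟨A, B, f, g, h, hT, hA, hB⟩ := hM.1.trunc (Y⟦(-1:ℤ)⟧)
  have hBM : perpZ M B := by
    intro i
    rcases le_or_gt i 0 with hi | hi
    · exact hB i hi
    · refine extClosed_noHom_shift_tgt M (0 < ·) _ (rot_of_distTriang _ hT)
        (fun n hn => ?_) (hM.2 _ hA.shift) i hi
      exact (hY (-1 + n) (by omega)).of_iso_tgt ((shiftFunctorAdd C (-1) n).app Y)
  have hXY : NoHom X (Y⟦(-1:ℤ)⟧⟦(1:ℤ)⟧) :=
    noHom_obj₂_tgt (Triangle.shift_distinguished _ hT 1) (hA.leftPerpGt0 hXM 1 one_pos)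
      (hX.perpZ_left hBM 1)
  exact hXY.of_iso_tgt ((shiftFunctorCompIsoId C (-1) 1 (by norm_num)).app Y)

lemma PartialSilting.addObj_of_leftPerpGt0 {k : Type*} [Field k] [Linear k C]
    (hfin : HomFinite (C := C) k) (hKS : KrullSchmidt (C := C)) {M X : C}
    (hM : PartialSilting M) (hX : suspObj M X) (hXM : leftPerpGt0 M X) : addObj M X := by
  obtain ⟨E, hE, q, hq⟩ := exists_rightApprox hfin M X
  obtain ⟨D, e, d, hT⟩ := distinguished_cocone_triangle q
  have hE' : suspObj M E := hM.1.suspObj_of_addObj hE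
  have hD : ∀ i : ℤ, 0 ≤ i → NoHom M (D⟦i⟧) := by
    intro i hi
    rcases hi.eq_or_lt with rfl | hi
    · refine NoHom.of_iso_tgt ((shiftFunctorZero C ℤ).app D).symm fun φ => ?_
      obtain ⟨ψ, rfl⟩ := Triangle.coyoneda_exact₃ _ hT φ (hM.2 E hE' 1 one_pos _)
      obtain ⟨χ, rfl⟩ := hq ψ
      have hqe : q ≫ e = 0 := comp_distTriang_mor_zero₁₂ _ hT
      change (χ ≫ q) ≫ e = 0
      rw [Category.assoc, hqe, comp_zero]
    · exact extClosed_noHom_shift_tgt M (0 < ·) _ (rot_of_distTriang _ hT) (hM.2 X hX)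
        (hM.2 _ hE'.shift) i hi
  have he : e = 0 := hM.noHom_of_forall_nonneg hX hXM hD e
  obtain ⟨s, hs⟩ := Triangle.coyoneda_exact₂ _ hT (𝟙 X) (by
    change 𝟙 X ≫ e = 0
    rw [he]
    exact comp_zero)
  exact addObj_of_retract hKS ⟨s, q, hs.symm⟩ hE

end Coheart

section Lift

/-- The properties of `b` in a triangle `M₀ ⟶ Y ⟶ Z ⟶ M₀⟦1⟧` with `M₀ ∈ susp M`
and `Y ∈ ⊥(>0) M` (making `Y` a lift of `Z` along `M`) that are used; unlike the triangle,
they are evidently stable under biproducts and isomorphisms. -/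
structure IsLiftAlong (M : C) {Y Z : C} (b : Y ⟶ Z) : Prop where
  leftPerp : leftPerpGt0 M Y
  lift : ∀ ⦃X : C⦄, leftPerpGt0 M X → ∀ f : X ⟶ Z, ∃ g, g ≫ b = f
  fiber : ∃ (M₀ : C) (a : M₀ ⟶ Y), suspObj M M₀ ∧
    ∀ ⦃X : C⦄ (f : X ⟶ Y), f ≫ b = 0 → ∃ g, g ≫ a = f

variable {M : C}

lemma isLiftAlong_of_distTriang {M₀ Y Z : C} {a : M₀ ⟶ Y} {b : Y ⟶ Z}
    {c : Z ⟶ M₀⟦(1:ℤ)⟧} (hT : Triangle.mk a b c ∈ distTriang C) (hM₀ : suspObj M M₀)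
    (hY : leftPerpGt0 M Y) :
    IsLiftAlong M b where
  leftPerp := hY
  lift X hX f := by
    obtain ⟨g, hg⟩ := Triangle.coyoneda_exact₂ _ (rot_of_distTriang _ hT) f
      (hM₀.leftPerpGt0 hX 1 one_pos _)
    exact ⟨g, hg.symm⟩
  fiber := ⟨M₀, a, hM₀, fun _ f hf =>
    (Triangle.coyoneda_exact₂ _ hT f hf).imp fun _ h => h.symm⟩

lemma IsLiftAlong.comp_iso {Y Z Z' : C} {b : Y ⟶ Z} (hb : IsLiftAlong M b) (e : Z ≅ Z') :
    IsLiftAlong M (b ≫ e.hom) where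
  leftPerp := hb.leftPerp
  lift X hX f := (hb.lift hX (f ≫ e.inv)).imp fun g hg => by simp [reassoc_of% hg]
  fiber := by
    obtain ⟨M₀, a, hM₀, ha⟩ := hb.fiber
    exact ⟨M₀, a, hM₀, fun X f hf => ha f (by simpa using hf =≫ e.inv)⟩

lemma IsLiftAlong.biprod_map {Y Z Y' Z' : C} {b : Y ⟶ Z} {b' : Y' ⟶ Z'} (hb : IsLiftAlong M b)
    (hb' : IsLiftAlong M b') : IsLiftAlong M (biprod.map b b') where
  leftPerp i hi := noHom_biprod_src (hb.leftPerp i hi) (hb'.leftPerp i hi)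
  lift X hX f := by
    obtain ⟨g, hg⟩ := hb.lift hX (f ≫ biprod.fst)
    obtain ⟨g', hg'⟩ := hb'.lift hX (f ≫ biprod.snd)
    exact ⟨biprod.lift g g', by ext <;> simp [hg, hg']⟩
  fiber := by
    obtain ⟨M₀, a, hM₀, ha⟩ := hb.fiber
    obtain ⟨M₀', a', hM₀', ha'⟩ := hb'.fiber
    refine ⟨M₀ ⊞ M₀', biprod.map a a', hM₀.biprod hM₀', fun X f hf => ?_⟩
    obtain ⟨g, hg⟩ := ha (f ≫ biprod.fst) (by simpa using hf =≫ biprod.fst)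
    obtain ⟨g', hg'⟩ := ha' (f ≫ biprod.snd) (by simpa using hf =≫ biprod.snd)
    exact ⟨biprod.lift g g', by ext <;> simp [hg, hg']⟩

lemma IsLiftAlong.exists_endo_lift {Y Z Y' Z' : C} {b : Y ⟶ Z} {b' : Y' ⟶ Z'}
    (hb : IsLiftAlong M b) (hb' : IsLiftAlong M b') {f : Z ⟶ Z} (hf : SumFactorsThrough Z' f) :
    ∃ ρ : Y ⟶ Y, ρ ≫ b = b ≫ f ∧ SumFactorsThrough Y' ρ := by
  obtain ⟨n, u, v, rfl⟩ := hf
  choose r₁ hr₁ using fun i => hb'.lift hb.leftPerp (b ≫ u i)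
  choose r₂ hr₂ using fun i => hb.lift hb'.leftPerp (b' ≫ v i)
  exact ⟨∑ i, r₁ i ≫ r₂ i, by simp [Preadditive.sum_comp, Preadditive.comp_sum, hr₂,
    reassoc_of% hr₁], n, r₁, r₂, rfl⟩

lemma IsLiftAlong.addObj_biprod {k : Type*} [Field k] [Linear k C] (hfin : HomFinite (C := C) k)
    (hKS : KrullSchmidt (C := C)) (hM : PartialSilting M) {Y Z Y' Z' : C} {b : Y ⟶ Z}
    {b' : Y' ⟶ Z'} (hb : IsLiftAlong M b) (hb' : IsLiftAlong M b') (hZ : addObj Z' Z) :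
    addObj (M ⊞ Y') Y := by
  obtain ⟨ρ, hρb, hρ⟩ := hb.exists_endo_lift hb' (sumFactorsThrough_id_of_addObj hZ)
  obtain ⟨M₀, a, hM₀, ha⟩ := hb.fiber
  obtain ⟨ε, hε⟩ := ha (𝟙 Y - ρ) (by simp [Preadditive.sub_comp, hρb])
  refine addObj_of_forall_isLocalRing_retract hKS fun X _ r => ?_
  -- `𝟙 Y = ρ + ε ≫ a`, restricted to the local summand `X`
  have hu : IsUnit (End.of (r.i ≫ ρ ≫ r.r) + End.of ((r.i ≫ ε) ≫ a ≫ r.r)) := by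
    convert isUnit_one (M := End X)
    change r.i ≫ ρ ≫ r.r + (r.i ≫ ε) ≫ a ≫ r.r = 𝟙 X
    rw [Category.assoc, reassoc_of% hε, ← Preadditive.comp_add, ← Preadditive.add_comp]
    simp
  rcases IsLocalRing.isUnit_or_isUnit_of_isUnit_add hu with h | h
  · obtain ⟨r'⟩ := (hρ.comp_comp r.i r.r).nonempty_retract h
    exact addObj_trans (addObj_biprod_right M Y') (addObj_of_retract_of_isLocalRing hKS r')
  · obtain ⟨r'⟩ := nonempty_retract_of_isUnit _ _ h
    refine addObj_trans (addObj_biprod_left M Y')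
      (hM.addObj_of_leftPerpGt0 hfin hKS (hM.1.aisle_of_retract hM₀ r') fun i hi f => ?_)
    simpa using r.i ≫= hb.leftPerp i hi (r.r ≫ f)

end Lift

section SiltingReduction

variable {P Q Q' P₀ : C} {a : P₀ ⟶ Q'} {b : Q' ⟶ Q} {c : Q ⟶ P₀⟦(1:ℤ)⟧}

lemma IsTStr.suspObj_biprod_left {G : C → Prop} (ht : IsTStr (suspObj (P ⊞ Q')) G) :
    suspObj (P ⊞ Q') P :=
  ht.aisle_of_retract (suspObj_self _) ⟨biprod.inl, biprod.fst, by simp⟩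

lemma IsTStr.suspObj_biprod_right {G : C → Prop} (ht : IsTStr (suspObj (P ⊞ Q')) G) :
    suspObj (P ⊞ Q') Q' :=
  ht.aisle_of_retract (suspObj_self _) ⟨biprod.inr, biprod.snd, by simp⟩

lemma suspObj_sigmaInv {G : C → Prop} (ht : IsTStr (suspObj (P ⊞ Q')) G)
    (hTr : Triangle.mk a b c ∈ distTriang C) (hP₀ : suspObj P P₀) : suspObj (P ⊞ Q') Q :=
  (suspended_suspObj _).ext _ (rot_of_distTriang _ hTr) ht.suspObj_biprod_right
    (ht.suspObj_biprod_left.trans hP₀).shift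

lemma perpLe_sigmaInv (hTr : Triangle.mk a b c ∈ distTriang C) (hP₀ : suspObj P P₀) {Y : C}
    (hYP : perpLe P 0 Y) (hYQ : perpLe Q 0 Y) : perpLe (P ⊞ Q') 0 Y := fun i hi =>
  noHom_biprod_src (hYP i hi) (noHom_obj₂_src hTr (hP₀.perpLe_left hYP i hi) (hYQ i hi))

theorem nonempty_iso_truncation_sigmaInv
    (ht : IsTStr (suspObj (P ⊞ Q')) (perpLe (P ⊞ Q') 0)) (hQperp : perpZ P Q)
    (hTr : Triangle.mk a b c ∈ distTriang C) (hP₀ : suspObj P P₀)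
    {X A B A₂ B₂ A₃ B₃ : C} {f : A ⟶ X} {g : X ⟶ B} {h : B ⟶ A⟦(1:ℤ)⟧}
    (hT : Triangle.mk f g h ∈ distTriang C) (hA : suspObj P A) (hB : perpLe P 0 B)
    {f₂ : A₂ ⟶ B} {g₂ : B ⟶ B₂} {h₂ : B₂ ⟶ A₂⟦(1:ℤ)⟧}
    (hT₂ : Triangle.mk f₂ g₂ h₂ ∈ distTriang C) (hA₂ : suspObj Q A₂)
    (hB₂ : perpLe Q 0 B₂)
    {f₃ : A₃ ⟶ X} {g₃ : X ⟶ B₃} {h₃ : B₃ ⟶ A₃⟦(1:ℤ)⟧}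
    (hT₃ : Triangle.mk f₃ g₃ h₃ ∈ distTriang C) (hA₃ : suspObj (P ⊞ Q') A₃)
    (hB₃ : perpLe (P ⊞ Q') 0 B₃) :
    Nonempty (B₂ ≅ B₃) := by
  have hB₂P : perpLe P 0 B₂ := extClosed_noHom_shift_tgt P (· ≤ 0) _
    (rot_of_distTriang _ hT₂) hB fun i _ => hA₂.shift.perpZ_right hQperp i
  have hg : ObjectProperty.isLocal (perpLe (P ⊞ Q') 0) (g ≫ g₂) :=
    MorphismProperty.comp_mem _ _ _
      (ht.isLocal_of_distTriang hT (ht.suspObj_biprod_left.trans hA))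
      (ht.isLocal_of_distTriang hT₂ ((suspObj_sigmaInv ht hTr hP₀).trans hA₂))
  exact hg.nonempty_iso (ht.isLocal_of_distTriang hT₃ hA₃)
    (perpLe_sigmaInv hTr hP₀ hB₂P hB₂) hB₃

theorem addObj_sigmaInv_lift_iff {k : Type*} [Field k] [Linear k C]
    (hfin : HomFinite (C := C) k) (hKS : KrullSchmidt (C := C)) (hP : PartialSilting P)
    (hQ : PartialSilting Q) (ht : IsTStr (suspObj (P ⊞ Q')) (perpLe (P ⊞ Q') 0))
    (hQperp : perpZ P Q) (hTr : Triangle.mk a b c ∈ distTriang C) (hP₀ : suspObj P P₀)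
    (hQ' : leftPerpGt0 P Q') {R R₁ R₂ W T₀ Q₀ P₁ : C} (hRP : perpZ P R) (hRQ : perpZ Q R)
    {a₁ : T₀ ⟶ R₁} {b₁ : R₁ ⟶ R} {c₁ : R ⟶ T₀⟦(1:ℤ)⟧}
    (hT₁ : Triangle.mk a₁ b₁ c₁ ∈ distTriang C) (hT₀ : suspObj (P ⊞ Q') T₀)
    (hR₁ : leftPerpGt0 (P ⊞ Q') R₁)
    {a₂ : Q₀ ⟶ R₂} {b₂ : R₂ ⟶ R} {c₂ : R ⟶ Q₀⟦(1:ℤ)⟧}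
    (hT₂ : Triangle.mk a₂ b₂ c₂ ∈ distTriang C) (hQ₀ : suspObj Q Q₀)
    (hR₂ : leftPerpGt0 Q R₂)
    {a₃ : P₁ ⟶ W} {b₃ : W ⟶ Q ⊞ R₂} {c₃ : Q ⊞ R₂ ⟶ P₁⟦(1:ℤ)⟧}
    (hT₃ : Triangle.mk a₃ b₃ c₃ ∈ distTriang C) (hP₁ : suspObj P P₁)
    (hW : leftPerpGt0 P W) (X : C) : addObj ((P ⊞ Q') ⊞ R₁) X ↔ addObj (P ⊞ W) X := by
  obtain ⟨A, Y, f, g, h, hTY, hA, hY⟩ := hP.1.trunc R₁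
  obtain ⟨A₂, B₂, f₂, g₂, h₂, hTB, hA₂, hB₂⟩ := hQ.1.trunc Y
  obtain ⟨e⟩ := nonempty_iso_truncation_sigmaInv ht hQperp hTr hP₀ hTY hA hY hTB hA₂ hB₂
    hT₁ hT₀ (perpLe_sigmaInv hTr hP₀ (fun i _ => hRP i) (fun i _ => hRQ i))
  -- `Y = σ_P^{>0} R₁` is a second lift of `R` along `Q`, next to `R₂`
  have hYQ : leftPerpGt0 Q Y := fun i hi => noHom_obj₂_src (rot_of_distTriang _ hTY)
    ((suspObj_sigmaInv ht hTr hP₀).leftPerpGt0 hR₁ i hi) (hA.shift.perpZ_left hQperp i)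
  have liftY : IsLiftAlong Q (g₂ ≫ e.hom) :=
    (isLiftAlong_of_distTriang hTB hA₂ hYQ).comp_iso e
  have liftR₂ : IsLiftAlong Q b₂ := isLiftAlong_of_distTriang hT₂ hQ₀ hR₂
  have hQY := addObj_biprod_iff_of_mutual
    (liftR₂.addObj_biprod hfin hKS hQ liftY (addObj_self R))
    (liftY.addObj_biprod hfin hKS hQ liftR₂ (addObj_self R))
  -- hence `Q' ⊞ R₁` and `W` are both lifts along `P` of objects with the same additive closure
  have liftV : IsLiftAlong P (biprod.map b g) :=
    (isLiftAlong_of_distTriang hTr hP₀ hQ').biprod_map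
      (isLiftAlong_of_distTriang hTY hA (ht.suspObj_biprod_left.leftPerpGt0 hR₁))
  have liftW : IsLiftAlong P b₃ := isLiftAlong_of_distTriang hT₃ hP₁ hW
  rw [addObj_congr_left (biprod.associator P Q' R₁)]
  exact addObj_biprod_iff_of_mutual
    (liftW.addObj_biprod hfin hKS hP liftV ((hQY _).2 (addObj_self _)))
    (liftV.addObj_biprod hfin hKS hP liftW ((hQY _).1 (addObj_self _))) X

end SiltingReduction

theorem statement14_general {k : Type w} [Field k] [Linear k C] (hfin : HomFinite (C := C) k)
    (hKS : KrullSchmidt (C := C)) (P Q Q' : C) (hP : PartialSilting P) (hQ : PartialSilting Q)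
    (hPQ' : PartialSilting (P ⊞ Q')) (hQperp : perpZ P Q)
    -- `Q' = σ_P^{-1}(Q)`-component: a truncation triangle `P₀ → Q' → Q → ΣP₀`
    (P₀ : C) (a : P₀ ⟶ Q') (b : Q' ⟶ Q) (c : Q ⟶ P₀⟦(1:ℤ)⟧)
    (hTr : Triangle.mk a b c ∈ (distTriang C)) (hP₀ : suspObj P P₀)
    (hQ' : leftPerpGt0 P Q') :
    -- (1) `σ_{P ⊞ Q'} ≅ σ_Q ∘ σ_P` on every object
    (∀ (X B B₂ B₃ A : C) (f : A ⟶ X) (g : X ⟶ B) (h : B ⟶ A⟦(1:ℤ)⟧),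
      Triangle.mk f g h ∈ (distTriang C) → suspObj P A → perpLe P 0 B →
      ∀ (A₂ : C) (f₂ : A₂ ⟶ B) (g₂ : B ⟶ B₂) (h₂ : B₂ ⟶ A₂⟦(1:ℤ)⟧),
        Triangle.mk f₂ g₂ h₂ ∈ (distTriang C) → suspObj Q A₂ → perpLe Q 0 B₂ →
      ∀ (A₃ : C) (f₃ : A₃ ⟶ X) (g₃ : X ⟶ B₃) (h₃ : B₃ ⟶ A₃⟦(1:ℤ)⟧),
        Triangle.mk f₃ g₃ h₃ ∈ (distTriang C) → suspObj (P ⊞ Q') A₃ →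
        perpLe (P ⊞ Q') 0 B₃ →
      Nonempty (B₂ ≅ B₃)) ∧
    -- (2) associativity of the composition rule
    (∀ R R₁ R₂ W : C, perpZ P R → perpZ Q R →
      -- `R₁` is the lift of `R` along `P ⊞ Q'`
      (∃ (T₀ : C) (a₁ : T₀ ⟶ R₁) (b₁ : R₁ ⟶ R) (c₁ : R ⟶ T₀⟦(1:ℤ)⟧),
        Triangle.mk a₁ b₁ c₁ ∈ (distTriang C) ∧ suspObj (P ⊞ Q') T₀ ∧
        leftPerpGt0 (P ⊞ Q') R₁) →
      -- `R₂` is the lift of `R` along `Q`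
      (∃ (Q₀ : C) (a₂ : Q₀ ⟶ R₂) (b₂ : R₂ ⟶ R) (c₂ : R ⟶ Q₀⟦(1:ℤ)⟧),
        Triangle.mk a₂ b₂ c₂ ∈ (distTriang C) ∧ suspObj Q Q₀ ∧ leftPerpGt0 Q R₂) →
      -- `W` is the lift of `Q ⊞ R₂` along `P`
      (∃ (P₁ : C) (a₃ : P₁ ⟶ W) (b₃ : W ⟶ Q ⊞ R₂) (c₃ : Q ⊞ R₂ ⟶ P₁⟦(1:ℤ)⟧),
        Triangle.mk a₃ b₃ c₃ ∈ (distTriang C) ∧ suspObj P P₁ ∧ leftPerpGt0 P W) →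
      ∀ X : C, addObj ((P ⊞ Q') ⊞ R₁) X ↔ addObj (P ⊞ W) X) := by
  refine ⟨fun X B B₂ B₃ A f g h hT hA hB A₂ f₂ g₂ h₂ hT₂ hA₂ hB₂ A₃ f₃ g₃ h₃ hT₃ hA₃ hB₃ =>
    nonempty_iso_truncation_sigmaInv hPQ'.1 hQperp hTr hP₀ hT hA hB hT₂ hA₂ hB₂ hT₃ hA₃ hB₃, ?_⟩
  rintro R R₁ R₂ W hRP hRQ ⟨T₀, a₁, b₁, c₁, hT₁, hT₀, hR₁⟩ ⟨Q₀, a₂, b₂, c₂, hT₂, hQ₀, hR₂⟩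
    ⟨P₁, a₃, b₃, c₃, hT₃, hP₁, hW⟩
  exact addObj_sigmaInv_lift_iff hfin hKS hP hQ hPQ'.1 hQperp hTr hP₀ hQ' hRP hRQ hT₁ hT₀ hR₁
    hT₂ hQ₀ hR₂ hT₃ hP₁ hW

/-- In the setting of iterated silting reduction, the truncation functors
satisfy `σ^{>0}_{σ_P^{-1}(Q)} ≅ σ^{>0}_Q ∘ σ^{>0}_P` (expressed objectwise via truncation
triangles), and consequently the composition rule `(Q, P) ↦ σ_P^{-1}(Q)` of the τ-cluster
morphism category is associative: `R ∘ (Q ∘ P) = (R ∘ Q) ∘ P`, i.e. the two composites agree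
up to additive equivalence. -/
theorem statement14 {k : Type w} [Field k] [Linear k C] (hfin : HomFinite (C := C) k)
    (hKS : KrullSchmidt (C := C)) (S : C) (hS : BoundedSilting S)
    (P Q Q' : C) (hP : PartialSilting P) (hQ : PartialSilting Q)
    (hPQ' : PartialSilting (P ⊞ Q')) (h2P : TwoTerm S P)
    (hQperp : perpZ P Q)
    -- `Q' = σ_P^{-1}(Q)`-component: a truncation triangle `P₀ → Q' → Q → ΣP₀`
    (P₀ : C) (a : P₀ ⟶ Q') (b : Q' ⟶ Q) (c : Q ⟶ P₀⟦(1:ℤ)⟧)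
    (hTr : Triangle.mk a b c ∈ (distTriang C)) (hP₀ : suspObj P P₀)
    (hQ' : leftPerpGt0 P Q') :
    -- (1) `σ_{P ⊞ Q'} ≅ σ_Q ∘ σ_P` on every object
    (∀ (X B B₂ B₃ A : C) (f : A ⟶ X) (g : X ⟶ B) (h : B ⟶ A⟦(1:ℤ)⟧),
      Triangle.mk f g h ∈ (distTriang C) → suspObj P A → perpLe P 0 B →
      ∀ (A₂ : C) (f₂ : A₂ ⟶ B) (g₂ : B ⟶ B₂) (h₂ : B₂ ⟶ A₂⟦(1:ℤ)⟧),
        Triangle.mk f₂ g₂ h₂ ∈ (distTriang C) → suspObj Q A₂ → perpLe Q 0 B₂ →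
      ∀ (A₃ : C) (f₃ : A₃ ⟶ X) (g₃ : X ⟶ B₃) (h₃ : B₃ ⟶ A₃⟦(1:ℤ)⟧),
        Triangle.mk f₃ g₃ h₃ ∈ (distTriang C) → suspObj (P ⊞ Q') A₃ →
        perpLe (P ⊞ Q') 0 B₃ →
      Nonempty (B₂ ≅ B₃)) ∧
    -- (2) associativity of the composition rule
    (∀ R R₁ R₂ W : C, perpZ P R → perpZ Q R →
      -- `R₁` is the lift of `R` along `P ⊞ Q'`
      (∃ (T₀ : C) (a₁ : T₀ ⟶ R₁) (b₁ : R₁ ⟶ R) (c₁ : R ⟶ T₀⟦(1:ℤ)⟧),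
        Triangle.mk a₁ b₁ c₁ ∈ (distTriang C) ∧ suspObj (P ⊞ Q') T₀ ∧
        leftPerpGt0 (P ⊞ Q') R₁) →
      -- `R₂` is the lift of `R` along `Q`
      (∃ (Q₀ : C) (a₂ : Q₀ ⟶ R₂) (b₂ : R₂ ⟶ R) (c₂ : R ⟶ Q₀⟦(1:ℤ)⟧),
        Triangle.mk a₂ b₂ c₂ ∈ (distTriang C) ∧ suspObj Q Q₀ ∧ leftPerpGt0 Q R₂) →
      -- `W` is the lift of `Q ⊞ R₂` along `P`
      (∃ (P₁ : C) (a₃ : P₁ ⟶ W) (b₃ : W ⟶ Q ⊞ R₂) (c₃ : Q ⊞ R₂ ⟶ P₁⟦(1:ℤ)⟧),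
        Triangle.mk a₃ b₃ c₃ ∈ (distTriang C) ∧ suspObj P P₁ ∧ leftPerpGt0 P W) →
      ∀ X : C, addObj ((P ⊞ Q') ⊞ R₁) X ↔ addObj (P ⊞ W) X) :=
  statement14_general hfin hKS P Q Q' hP hQ hPQ' hQperp P₀ a b c hTr hP₀ hQ'

end Paper
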